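/- Let X₁, X₂, … be a strictly stationary and ergodic sequence of real random variables whose essential supremum γ₁ is +∞, let (kₙ) be integers with 1 ≤ kₙ ≤ n, kₙ/n → 1, and a > 0. Set S(kₙ,n,a) = Σ_{i=1}^n X_i·1{X_{kₙ:n} − a < X_i < X_{kₙ:n}}. Then S(kₙ,n,a)/(n·X_{kₙ:n}) → 0 almost surely as n → ∞. -/

import Mathlib

open MeasureTheory Filter Set
open scoped Topology ENNReal

noncomputable section

/-- The shift map on real sequences. -/
def seqShift (y : ℕ → ℝ) : ℕ → ℝ := fun n => y (n + 1)

/-- The path map associating to each sample point the sequence of observations. -/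
def path {Ω : Type*} (X : ℕ → Ω → ℝ) (ω : Ω) : ℕ → ℝ := fun n => X n ω

/-- The `k`-th smallest value (k counted from 1) among `x 0, …, x (n-1)`. -/
def ordStat (k n : ℕ) (x : ℕ → ℝ) : ℝ :=
  ((List.ofFn (fun i : Fin n => x i)).insertionSort (· ≤ ·)).getD (k - 1) 0

/-- Number of observations among `x 0, …, x (n-1)` in the left `a`-neighborhood of the
`k`-th order statistic. -/
def nearCount (k n : ℕ) (a : ℝ) (x : ℕ → ℝ) : ℕ :=
  ((Finset.range n).filter
    (fun i => ordStat k n x - a < x i ∧ x i < ordStat k n x)).card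

/-- Sum of observations among `x 0, …, x (n-1)` in the left `a`-neighborhood of the
`k`-th order statistic. -/
def nearSum (k n : ℕ) (a : ℝ) (x : ℕ → ℝ) : ℝ :=
  ∑ i ∈ Finset.range n,
    if ordStat k n x - a < x i ∧ x i < ordStat k n x then x i else 0

/-- The right endpoint `sup {x : P(X ≤ x) < 1}` of the support of `X`, as an extended real. -/
def rightEndpoint {Ω : Type*} [MeasurableSpace Ω] (μ : Measure Ω) (X : Ω → ℝ) : EReal :=
  sSup ((fun r : ℝ => (r : EReal)) '' {r : ℝ | μ {ω | X ω ≤ r} < 1})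

/-!
Almost surely, for every integer level `m` the fraction of `X₀, …, X_{n-1}` exceeding `m` tends
to `p m = P(X₀ > m)`. This is Birkhoff's ergodic theorem for indicator functions, proved here by
the Katznelson–Weiss argument: the liminf of the visit frequencies of a set `A` is shift-invariant,
hence a.s. a constant `c`; for `s > c` almost every orbit starts with a block visiting `A` with
frequency `≤ s`, and tiling orbits by such blocks and integrating gives `P(A) ≤ s`.

Since `γ₁ = ∞`, every `p m` is positive, so as `kₙ / n → 1` eventually more than `n - kₙ`
observations exceed `m`, i.e. `X_{kₙ:n} > m`: the order statistic tends to `∞`. Once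
`X_{kₙ:n} ≥ m + a`, every observation counted in `K(kₙ, n, a)` exceeds `m`, so `K / n` is
eventually below `p m + ε`, and `p m → 0`. Finally `0 ≤ S ≤ X_{kₙ:n} K`.
-/

theorem Filter.liminf_le_liminf_of_tendsto_sub {ι : Type*} {l : Filter ι} [l.NeBot]
    {u v : ι → ℝ} (hv : IsBoundedUnder (· ≤ ·) l v) (hv' : IsBoundedUnder (· ≥ ·) l v)
    (h : Tendsto (fun i => u i - v i) l (𝓝 0)) : liminf u l ≤ liminf v l := by
  have := liminf_add_le h.isBoundedUnder_ge h.isBoundedUnder_le hv' hv.isCoboundedUnder_ge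
  simpa only [h.limsup_eq, zero_add, Pi.add_def, sub_add_cancel] using this

theorem le_of_forall_nat_mul_le_mul_add {x r C : ℝ} (h : ∀ L : ℕ, L * x ≤ L * r + C) :
    x ≤ r := by
  by_contra! hrx
  obtain ⟨L, hL⟩ := exists_nat_gt (C / (x - r))
  rw [div_lt_iff₀ (sub_pos.2 hrx)] at hL
  linarith [h L]

section Birkhoff

variable {α : Type*} {T : α → α}

theorem birkhoffSum_le_of_forall_exists_le {f : α → ℝ} (hf : ∀ y, f y ≤ 1) {M : ℕ} {r : ℝ}
    (hr : 0 ≤ r) (H : ∀ y, ∃ n ∈ Finset.Icc 1 M, birkhoffSum T f n y ≤ n * r) (L : ℕ) (y : α) :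
    birkhoffSum T f L y ≤ L * r + M := by
  induction L using Nat.strong_induction_on generalizing y with
  | _ L ih =>
  obtain ⟨n, hn, hny⟩ := H y
  rw [Finset.mem_Icc] at hn
  by_cases hnL : n ≤ L
  · obtain ⟨m, rfl⟩ := Nat.exists_eq_add_of_le hnL
    have hrest := ih m (by omega) (T^[n] y)
    rw [birkhoffSum_add, Nat.cast_add]
    linarith
  · have hL : birkhoffSum T f L y ≤ L :=
      (Finset.sum_le_sum fun i _ => hf _).trans (by simp)
    have : (L : ℝ) ≤ M := by exact_mod_cast (by omega : L ≤ M)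
    nlinarith [mul_nonneg (Nat.cast_nonneg (α := ℝ) L) hr]

theorem birkhoffAverage_mem_Icc {f : α → ℝ} (hf : ∀ y, f y ∈ Icc (0 : ℝ) 1) (n : ℕ) (y : α) :
    birkhoffAverage ℝ T f n y ∈ Icc (0 : ℝ) 1 := by
  rcases Nat.eq_zero_or_pos n with rfl | hn
  · simp
  have h0 : 0 ≤ birkhoffSum T f n y := Finset.sum_nonneg fun i _ => (hf _).1
  have h1 : birkhoffSum T f n y ≤ n := (Finset.sum_le_sum fun i _ => (hf _).2).trans (by simp)
  rw [birkhoffAverage, smul_eq_mul, inv_mul_eq_div]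
  exact ⟨by positivity, div_le_one_of_le₀ h1 (Nat.cast_nonneg n)⟩

theorem liminf_birkhoffAverage_apply {f : α → ℝ} (hf : ∀ y, f y ∈ Icc (0 : ℝ) 1) (y : α) :
    liminf (birkhoffAverage ℝ T f · (T y)) atTop = liminf (birkhoffAverage ℝ T f · y) atTop := by
  have hb : Bornology.IsBounded (range f) := Metric.isBounded_Icc (0 : ℝ) 1 |>.subset
    (range_subset_iff.2 hf)
  have hd := tendsto_birkhoffAverage_apply_sub_birkhoffAverage' (𝕜 := ℝ) hb T y
  have hbdd : ∀ z, IsBoundedUnder (· ≤ ·) atTop (birkhoffAverage ℝ T f · z) ∧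
      IsBoundedUnder (· ≥ ·) atTop (birkhoffAverage ℝ T f · z) := fun z =>
    ⟨isBoundedUnder_of ⟨1, fun n => (birkhoffAverage_mem_Icc hf n z).2⟩,
      isBoundedUnder_of ⟨0, fun n => (birkhoffAverage_mem_Icc hf n z).1⟩⟩
  refine le_antisymm (liminf_le_liminf_of_tendsto_sub (hbdd y).1 (hbdd y).2 hd)
    (liminf_le_liminf_of_tendsto_sub (hbdd _).1 (hbdd _).2 ?_)
  simpa using hd.neg

theorem indicator_one_mem_Icc (A : Set α) (y : α) : A.indicator (1 : α → ℝ) y ∈ Icc (0 : ℝ) 1 :=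
  ⟨indicator_nonneg (fun _ _ => zero_le_one) y, indicator_le_self' (fun _ _ => zero_le_one) y⟩

theorem birkhoffAverage_indicator_mem_Icc (T : α → α) (A : Set α) (n : ℕ) (y : α) :
    birkhoffAverage ℝ T (A.indicator 1) n y ∈ Icc (0 : ℝ) 1 :=
  birkhoffAverage_mem_Icc (indicator_one_mem_Icc A) n y

theorem isBoundedUnder_ge_birkhoffAverage_indicator (T : α → α) (A : Set α) (y : α) :
    IsBoundedUnder (· ≥ ·) atTop (birkhoffAverage ℝ T (A.indicator (1 : α → ℝ)) · y) :=
  isBoundedUnder_of ⟨0, fun n => (birkhoffAverage_indicator_mem_Icc T A n y).1⟩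

theorem Measurable.birkhoffSum {M : Type*} [AddCommMonoid M] [MeasurableSpace M]
    [MeasurableAdd₂ M] [MeasurableSpace α] {f : α → M} (hf : Measurable f) (hT : Measurable T)
    (n : ℕ) : Measurable (birkhoffSum T f n) :=
  Finset.measurable_sum _ fun i _ => hf.comp (hT.iterate i)

end Birkhoff

section BirkhoffMeasure

variable {α E : Type*} [MeasurableSpace α] [NormedAddCommGroup E] {ν : Measure α} {T : α → α}

theorem MeasureTheory.MeasurePreserving.integrable_birkhoffSum (hT : MeasurePreserving T ν ν)
    {f : α → E} (hf : Integrable f ν) (n : ℕ) : Integrable (birkhoffSum T f n) ν :=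
  integrable_finsetSum _ fun i _ => (hT.iterate i).integrable_comp_of_integrable hf

theorem MeasureTheory.MeasurePreserving.integral_birkhoffSum [NormedSpace ℝ E]
    (hT : MeasurePreserving T ν ν) {f : α → E} (hf : Integrable f ν) (n : ℕ) :
    ∫ y, birkhoffSum T f n y ∂ν = n • ∫ y, f y ∂ν := by
  have hcomp : ∀ i, ∫ y, f (T^[i] y) ∂ν = ∫ y, f y ∂ν := fun i => by
    rw [← integral_map (hT.iterate i).measurable.aemeasurable
      (by rw [(hT.iterate i).map_eq]; exact hf.aestronglyMeasurable), (hT.iterate i).map_eq]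
  simp only [birkhoffSum]
  rw [integral_finsetSum (f := fun i y => f (T^[i] y)) _
    fun i _ => (hT.iterate i).integrable_comp_of_integrable hf]
  simp [hcomp]

theorem MeasureTheory.MeasurePreserving.measureReal_le_of_forall_exists_birkhoffSum_le
    [IsProbabilityMeasure ν] (hT : MeasurePreserving T ν ν) {C : Set α} (hC : MeasurableSet C)
    {M : ℕ} {r : ℝ} (hr : 0 ≤ r)
    (H : ∀ y, ∃ n ∈ Finset.Icc 1 M, birkhoffSum T (C.indicator 1) n y ≤ n * r) :
    ν.real C ≤ r := by
  have hint : Integrable (C.indicator (1 : α → ℝ)) ν := (integrable_const 1).indicator hC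
  refine le_of_forall_nat_mul_le_mul_add (C := M) fun L => ?_
  calc L * ν.real C = ∫ y, birkhoffSum T (C.indicator 1) L y ∂ν := by
        rw [hT.integral_birkhoffSum hint, integral_indicator_one hC, nsmul_eq_mul]
    _ ≤ ∫ _, (L * r + M : ℝ) ∂ν := by
        refine integral_mono (hT.integrable_birkhoffSum hint L) (integrable_const _) fun y =>
          birkhoffSum_le_of_forall_exists_le (fun y => ?_) hr H L y
        exact indicator_le_self' (fun _ _ => zero_le_one) y
    _ = L * r + M := by simp

end BirkhoffMeasure

section BirkhoffErgodic

variable {α : Type*} [MeasurableSpace α] {ν : Measure α} [IsProbabilityMeasure ν] {T : α → α}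
  {A : Set α}

theorem MeasureTheory.MeasurePreserving.measureReal_le_of_ae_exists_birkhoffSum_le
    (hT : MeasurePreserving T ν ν) (hA : MeasurableSet A) {r : ℝ}
    (H : ∀ᵐ y ∂ν, ∃ n, 1 ≤ n ∧ birkhoffSum T (A.indicator 1) n y ≤ n * r) : ν.real A ≤ r := by
  set f : α → ℝ := A.indicator 1
  have hf0 : ∀ y, 0 ≤ f y := indicator_nonneg fun _ _ => zero_le_one
  have hr : 0 ≤ r := by
    obtain ⟨y, n, hn, hy⟩ := H.exists
    have : (0 : ℝ) ≤ n * r := (Finset.sum_nonneg fun i _ => hf0 _).trans hy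
    exact nonneg_of_mul_nonneg_right this (by exact_mod_cast hn)
  set G : ℕ → Set α := fun M => ⋃ n ∈ Finset.Icc 1 M, {y | birkhoffSum T f n y ≤ n * r}
  have hGm : ∀ M, MeasurableSet (G M) := fun M => Finset.measurableSet_biUnion _ fun n _ =>
    measurableSet_le ((measurable_one.indicator hA).birkhoffSum hT.measurable n) measurable_const
  have hGmono : Monotone G := fun M M' h => biUnion_subset_biUnion_left
    (Finset.coe_subset.2 (Finset.Icc_subset_Icc_right h))
  have hGlim : Tendsto (fun M => ν.real (G M)) atTop (𝓝 1) := by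
    have hfull : ν (⋃ M, G M) = 1 := by
      rw [← measure_univ (μ := ν),
        ← ae_mem_iff_measure_eq (MeasurableSet.iUnion hGm).nullMeasurableSet]
      filter_upwards [H] with y ⟨n, hn, hny⟩
      exact mem_iUnion.2 ⟨n, mem_iUnion₂.2 ⟨n, Finset.mem_Icc.2 ⟨hn, le_rfl⟩, hny⟩⟩
    have := tendsto_measure_iUnion_atTop (μ := ν) hGmono
    rw [hfull] at this
    exact (ENNReal.tendsto_toReal ENNReal.one_ne_top).comp this
  refine le_of_forall_pos_le_add fun ε hε => ?_
  obtain ⟨M, hM⟩ := (hGlim.eventually (eventually_gt_nhds (by linarith : 1 - ε < 1))).exists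
  -- Removing `(G M)ᶜ` from `A` lets every orbit be tiled by blocks of length `≤ M + 1` along
  -- which the visits to `A ∩ G M` have frequency `≤ r`.
  have hC : ν.real (A ∩ G M) ≤ r := by
    refine hT.measureReal_le_of_forall_exists_birkhoffSum_le (hA.inter (hGm M)) (M := M + 1) hr
      fun y => ?_
    by_cases hy : y ∈ G M
    · obtain ⟨n, hn, hny⟩ := mem_iUnion₂.1 hy
      refine ⟨n, Finset.Icc_subset_Icc_right M.le_succ hn, le_trans ?_ hny⟩
      exact Finset.sum_le_sum fun i _ =>
        indicator_le_indicator_of_subset inter_subset_left (fun _ => zero_le_one) _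
    · refine ⟨1, by simp, ?_⟩
      simp [birkhoffSum_one, indicator_of_notMem (fun h : y ∈ A ∩ G M => hy h.2), hr]
  have hsplit : ν.real A ≤ ν.real (A ∩ G M) + ν.real (G M)ᶜ := by
    rw [← measureReal_inter_add_sdiff (s := A) (hGm M)]
    exact add_le_add le_rfl (measureReal_mono (sdiff_subset_compl _ _))
  rw [measureReal_compl (hGm M), probReal_univ] at hsplit
  linarith

theorem Ergodic.measureReal_le_liminf_birkhoffAverage (hT : Ergodic T ν) (hA : MeasurableSet A) :
    ∀ᵐ y ∂ν, ν.real A ≤ liminf (birkhoffAverage ℝ T (A.indicator 1) · y) atTop := by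
  set g : α → ℝ := fun y => liminf (birkhoffAverage ℝ T (A.indicator 1) · y) atTop
  have hgm : Measurable g := Measurable.liminf fun n =>
    ((measurable_one.indicator hA).birkhoffSum hT.measurable n).const_smul (n : ℝ)⁻¹
  have hgT : g ∘ T = g := funext fun y => liminf_birkhoffAverage_apply
    (indicator_one_mem_Icc A) y
  obtain ⟨c, hc⟩ := hT.toPreErgodic.ae_eq_const_of_ae_eq_comp hgm hgT
  suffices ν.real A ≤ c by filter_upwards [hc] with y hy using this.trans_eq hy.symm
  refine le_of_forall_gt_imp_ge_of_dense fun s hs =>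
    hT.toMeasurePreserving.measureReal_le_of_ae_exists_birkhoffSum_le hA ?_
  filter_upwards [hc] with y hy
  have hbdd : IsBoundedUnder (· ≤ ·) atTop (birkhoffAverage ℝ T (A.indicator 1) · y) :=
    isBoundedUnder_of ⟨1, fun n => (birkhoffAverage_indicator_mem_Icc T A n y).2⟩
  have hfreq := frequently_lt_of_liminf_lt hbdd.isCoboundedUnder_ge (show g y < s from hy ▸ hs)
  obtain ⟨n, hlt, hn⟩ := (hfreq.and_eventually (eventually_ge_atTop 1)).exists
  refine ⟨n, hn, ?_⟩
  rw [birkhoffAverage, smul_eq_mul, inv_mul_eq_div, div_lt_iff₀ (by exact_mod_cast hn)] at hlt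
  linarith

theorem Ergodic.ae_tendsto_birkhoffAverage_indicator (hT : Ergodic T ν) (hA : MeasurableSet A) :
    ∀ᵐ y ∂ν, Tendsto (birkhoffAverage ℝ T (A.indicator 1) · y) atTop (𝓝 (ν.real A)) := by
  filter_upwards [hT.measureReal_le_liminf_birkhoffAverage hA,
    hT.measureReal_le_liminf_birkhoffAverage hA.compl] with y hy hyc
  have hsum : ∀ n ≠ 0, birkhoffAverage ℝ T (A.indicator (1 : α → ℝ)) n y +
      birkhoffAverage ℝ T (Aᶜ.indicator 1) n y = 1 := fun n hn => by
    have h := congrFun (congrFun (birkhoffAverage_add (R := ℝ) (f := T)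
      (g := A.indicator (1 : α → ℝ)) (g' := Aᶜ.indicator 1)) n) y
    rw [indicator_self_add_compl, birkhoffAverage_of_comp_eq ℝ (f := T) (g := (1 : α → ℝ)) rfl
      (Nat.cast_ne_zero.2 hn)] at h
    exact h.symm
  refine tendsto_order.2 ⟨fun s hs => eventually_lt_of_lt_liminf (hs.trans_le hy)
    (isBoundedUnder_ge_birkhoffAverage_indicator T A y), fun s hs => ?_⟩
  have hsc : 1 - s < ν.real Aᶜ := by rw [measureReal_compl hA, probReal_univ]; linarith
  filter_upwards [eventually_lt_of_lt_liminf (hsc.trans_le hyc)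
    (isBoundedUnder_ge_birkhoffAverage_indicator T Aᶜ y), eventually_ne_atTop 0] with n hn hn0
  linarith [hsum n hn0]

end BirkhoffErgodic

def exceedCount (M : ℝ) (n : ℕ) (x : ℕ → ℝ) : ℕ :=
  ((Finset.range n).filter fun i => M < x i).card

theorem seqShift_iterate_apply (y : ℕ → ℝ) (i j : ℕ) : seqShift^[i] y j = y (j + i) := by
  induction i generalizing y with
  | zero => rfl
  | succ i ih => rw [Function.iterate_succ_apply, ih]; rfl

theorem birkhoffSum_seqShift_indicator (M : ℝ) (n : ℕ) (y : ℕ → ℝ) :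
    birkhoffSum seqShift ({z : ℕ → ℝ | M < z 0}.indicator 1) n y = (exceedCount M n y : ℝ) := by
  rw [exceedCount, Finset.natCast_card_filter]
  refine Finset.sum_congr rfl fun i _ => ?_
  simp [indicator_apply, seqShift_iterate_apply]

theorem ae_tendsto_exceedCount_div {Ω : Type*} [MeasurableSpace Ω] {μ : Measure Ω}
    [IsProbabilityMeasure μ] {X : ℕ → Ω → ℝ} (hX : ∀ n, Measurable (X n))
    (herg : Ergodic seqShift (μ.map (path X))) (M : ℝ) :
    ∀ᵐ ω ∂μ, Tendsto (fun n => (exceedCount M n (path X ω) : ℝ) / n) atTop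
      (𝓝 (μ.real {ω | M < X 0 ω})) := by
  have hpath : Measurable (path X) := measurable_pi_lambda _ hX
  have : IsProbabilityMeasure (μ.map (path X)) :=
    Measure.isProbabilityMeasure_map hpath.aemeasurable
  have hA : MeasurableSet {z : ℕ → ℝ | M < z 0} :=
    measurableSet_lt measurable_const (measurable_pi_apply 0)
  have hlaw : (μ.map (path X)).real {z | M < z 0} = μ.real {ω | M < X 0 ω} :=
    map_measureReal_apply hpath hA
  filter_upwards [ae_of_ae_map hpath.aemeasurable
    (herg.ae_tendsto_birkhoffAverage_indicator hA)] with ω hω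
  rw [← hlaw]
  refine hω.congr fun n => ?_
  rw [birkhoffAverage, birkhoffSum_seqShift_indicator, smul_eq_mul, inv_mul_eq_div]

theorem exceedCount_eq_countP (M : ℝ) (n : ℕ) (x : ℕ → ℝ) :
    exceedCount M n x = (List.ofFn fun i : Fin n => x i).countP (M < ·) := by
  induction n with
  | zero => rfl
  | succ n ih =>
    rw [List.ofFn_succ', List.concat_eq_append, List.countP_append]
    simp only [Fin.val_castSucc, Fin.val_last]
    rw [← ih, exceedCount, exceedCount, Finset.range_add_one, Finset.filter_insert]
    split_ifs with h
    · simp [Finset.card_insert_of_notMem, h]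
    · simp [h]

theorem lt_ordStat_of_sub_lt_exceedCount {k n : ℕ} {M : ℝ} {x : ℕ → ℝ} (hk : 1 ≤ k)
    (hkn : k ≤ n) (h : n - k < exceedCount M n x) : M < ordStat k n x := by
  set l := (List.ofFn fun i : Fin n => x i).insertionSort (· ≤ ·)
  have hlen : l.length = n := by simp [l]
  have hsorted : l.Pairwise (· ≤ ·) := List.pairwise_insertionSort _ _
  have hidx : k - 1 < l.length := by omega
  rw [ordStat, List.getD_eq_getElem _ _ hidx]
  by_contra! hle
  -- The list is sorted and its `k`-th entry is `≤ M`, so every value above `M` lies in `l.drop k`.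
  have htake : (l.take k).countP (M < ·) = 0 := by
    refine List.countP_eq_zero.2 fun z hz => ?_
    obtain ⟨j, hj, rfl⟩ := List.mem_iff_getElem.1 hz
    rw [List.length_take] at hj
    rw [List.getElem_take, decide_eq_true_eq, not_lt]
    exact (hsorted.rel_get_of_le (a := ⟨j, by omega⟩) (b := ⟨k - 1, hidx⟩)
      (by simp; omega)).trans hle
  have hcount : exceedCount M n x = l.countP (M < ·) := by
    rw [exceedCount_eq_countP, (List.perm_insertionSort _ _).countP_eq]
  have hdrop := (l.drop k).countP_le_length (p := (M < ·))
  rw [← List.take_append_drop k l, List.countP_append, htake] at hcount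
  rw [List.length_drop, hlen] at hdrop
  omega

section Tail

variable {Ω : Type*} [MeasurableSpace Ω] {μ : Measure Ω} {X : Ω → ℝ}

theorem measure_le_lt_one_of_rightEndpoint_eq_top (h : rightEndpoint μ X = ⊤) (r : ℝ) :
    μ {ω | X ω ≤ r} < 1 := by
  by_contra! hr
  have : rightEndpoint μ X ≤ r := sSup_le <| by
    rintro _ ⟨r', hr', rfl⟩
    by_contra! hlt
    exact (hr.trans (measure_mono fun ω (hω : X ω ≤ r) =>
      hω.trans (EReal.coe_lt_coe_iff.1 hlt).le)).not_gt hr'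
  simp [h] at this

theorem measureReal_lt_pos_of_rightEndpoint_eq_top [IsProbabilityMeasure μ] (hX : Measurable X)
    (h : rightEndpoint μ X = ⊤) (r : ℝ) : 0 < μ.real {ω | r < X ω} := by
  have hcompl : {ω | r < X ω} = {ω | X ω ≤ r}ᶜ := by ext; simp
  rw [hcompl, measureReal_compl (measurableSet_le hX measurable_const), probReal_univ, sub_pos,
    measureReal_def, ← ENNReal.toReal_one]
  exact ENNReal.toReal_strict_mono ENNReal.one_ne_top
    (measure_le_lt_one_of_rightEndpoint_eq_top h r)

theorem tendsto_measureReal_lt_atTop [IsFiniteMeasure μ] (hX : Measurable X) :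
    Tendsto (fun r : ℝ => μ.real {ω | r < X ω}) atTop (𝓝 0) := by
  have hanti : Antitone fun r : ℝ => {ω | r < X ω} := fun r r' h ω (hω : r' < X ω) => h.trans_lt hω
  have hempty : ⋂ r : ℝ, {ω | r < X ω} = ∅ :=
    eq_empty_of_forall_notMem fun ω hω => lt_irrefl (X ω) (mem_iInter.1 hω (X ω))
  have := tendsto_measure_iInter_atTop (μ := μ)
    (fun r => (measurableSet_lt measurable_const hX).nullMeasurableSet) hanti ⟨0, by finiteness⟩
  rw [hempty, measure_empty] at this
  exact (ENNReal.tendsto_toReal ENNReal.zero_ne_top).comp this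

end Tail

section NearSum

variable {k : ℕ → ℕ} {x : ℕ → ℝ} {p : ℕ → ℝ}

theorem tendsto_ordStat_atTop (hk : ∀ n, 1 ≤ n → 1 ≤ k n ∧ k n ≤ n)
    (hk1 : Tendsto (fun n => (k n : ℝ) / n) atTop (𝓝 1))
    (hfreq : ∀ m : ℕ, Tendsto (fun n => (exceedCount m n x : ℝ) / n) atTop (𝓝 (p m)))
    (hp : ∀ m, 0 < p m) : Tendsto (fun n => ordStat (k n) n x) atTop atTop := by
  refine tendsto_atTop.2 fun M => ?_
  obtain ⟨m, hm⟩ := exists_nat_gt M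
  have hgap : Tendsto (fun n => 1 - (k n : ℝ) / n) atTop (𝓝 0) := by
    simpa using (tendsto_const_nhds (x := (1 : ℝ))).sub hk1
  filter_upwards [hgap.eventually (eventually_lt_nhds (half_pos (hp m))),
    (hfreq m).eventually (eventually_gt_nhds (half_lt_self (hp m))), eventually_ge_atTop 1]
    with n hgap_n hfreq_n hn
  obtain ⟨hk1n, hkn⟩ := hk n hn
  have hnpos : (0 : ℝ) < n := by exact_mod_cast hn
  have hlt := hgap_n.trans hfreq_n
  rw [one_sub_div hnpos.ne', div_lt_div_iff_of_pos_right hnpos, ← Nat.cast_sub hkn] at hlt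
  exact hm.le.trans (lt_ordStat_of_sub_lt_exceedCount hk1n hkn (by exact_mod_cast hlt)).le

theorem nearCount_le_exceedCount {k n : ℕ} {a M : ℝ} (h : M + a ≤ ordStat k n x) :
    nearCount k n a x ≤ exceedCount M n x :=
  Finset.card_le_card fun i hi => by
    simp only [Finset.mem_filter] at hi ⊢
    exact ⟨hi.1, by linarith [hi.2.1]⟩

theorem tendsto_nearCount_div (a : ℝ) (hord : Tendsto (fun n => ordStat (k n) n x) atTop atTop)
    (hfreq : ∀ m : ℕ, Tendsto (fun n => (exceedCount m n x : ℝ) / n) atTop (𝓝 (p m)))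
    (hp0 : Tendsto p atTop (𝓝 0)) :
    Tendsto (fun n => (nearCount (k n) n a x : ℝ) / n) atTop (𝓝 0) := by
  refine tendsto_order.2 ⟨fun b hb => Eventually.of_forall fun n => hb.trans_le (by positivity),
    fun b hb => ?_⟩
  obtain ⟨m, hm⟩ := (hp0.eventually (eventually_lt_nhds hb)).exists
  filter_upwards [hord.eventually_ge_atTop (m + a), (hfreq m).eventually (eventually_lt_nhds hm)]
    with n hord_n hfreq_n
  refine lt_of_le_of_lt ?_ hfreq_n
  gcongr
  exact nearCount_le_exceedCount hord_n

theorem nearSum_nonneg {k n : ℕ} {a : ℝ} (h : a ≤ ordStat k n x) : 0 ≤ nearSum k n a x :=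
  Finset.sum_nonneg fun i _ => by
    split_ifs with hi
    · linarith [hi.1]
    · exact le_rfl

theorem nearSum_le_nearCount_mul {k n : ℕ} {a : ℝ} :
    nearSum k n a x ≤ nearCount k n a x * ordStat k n x := by
  rw [nearSum, nearCount, Finset.natCast_card_filter, Finset.sum_mul]
  refine Finset.sum_le_sum fun i _ => ?_
  split_ifs with hi
  · rw [one_mul]; exact hi.2.le
  · rw [zero_mul]

theorem tendsto_nearSum_div (a : ℝ) (hk : ∀ n, 1 ≤ n → 1 ≤ k n ∧ k n ≤ n)
    (hk1 : Tendsto (fun n => (k n : ℝ) / n) atTop (𝓝 1))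
    (hfreq : ∀ m : ℕ, Tendsto (fun n => (exceedCount m n x : ℝ) / n) atTop (𝓝 (p m)))
    (hp : ∀ m, 0 < p m) (hp0 : Tendsto p atTop (𝓝 0)) :
    Tendsto (fun n => nearSum (k n) n a x / (n * ordStat (k n) n x)) atTop (𝓝 0) := by
  have hord := tendsto_ordStat_atTop hk hk1 hfreq hp
  have hlarge := hord.eventually (eventually_gt_atTop (max a 0))
  refine squeeze_zero' ?_ ?_ (tendsto_nearCount_div a hord hfreq hp0)
  · filter_upwards [hlarge] with n hn
    rw [max_lt_iff] at hn
    exact div_nonneg (nearSum_nonneg hn.1.le) (mul_nonneg n.cast_nonneg hn.2.le)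
  · filter_upwards [hlarge] with n hn
    have hpos : 0 < ordStat (k n) n x := (le_max_right _ _).trans_lt hn
    calc nearSum (k n) n a x / (n * ordStat (k n) n x)
        ≤ nearCount (k n) n a x * ordStat (k n) n x / (n * ordStat (k n) n x) := by
          gcongr
          exact nearSum_le_nearCount_mul
      _ = nearCount (k n) n a x / n := mul_div_mul_right _ _ hpos.ne'

end NearSum

theorem stmt13_general {Ω : Type*} [MeasurableSpace Ω] (μ : Measure Ω) [IsProbabilityMeasure μ]
    (X : ℕ → Ω → ℝ) (hX : ∀ n, Measurable (X n))
    (herg : Ergodic seqShift (Measure.map (path X) μ))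
    (hsup : rightEndpoint μ (X 0) = ⊤)
    (a : ℝ)
    (k : ℕ → ℕ) (hk : ∀ n, 1 ≤ n → 1 ≤ k n ∧ k n ≤ n)
    (hk1 : Tendsto (fun n => (k n : ℝ) / n) atTop (𝓝 1)) :
    ∀ᵐ ω ∂μ, Tendsto (fun n =>
      nearSum (k n) n a (path X ω) / (n * ordStat (k n) n (path X ω))) atTop (𝓝 0) := by
  filter_upwards [ae_all_iff.2 fun m : ℕ => ae_tendsto_exceedCount_div hX herg m] with ω hfreq
  exact tendsto_nearSum_div a hk hk1 hfreq
    (fun m => measureReal_lt_pos_of_rightEndpoint_eq_top (hX 0) hsup m)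
    ((tendsto_measureReal_lt_atTop (hX 0)).comp tendsto_natCast_atTop_atTop)

theorem stmt13 {Ω : Type*} [MeasurableSpace Ω] (μ : Measure Ω) [IsProbabilityMeasure μ]
    (X : ℕ → Ω → ℝ) (hX : ∀ n, Measurable (X n))
    (herg : Ergodic seqShift (Measure.map (path X) μ))
    (hsup : rightEndpoint μ (X 0) = ⊤)
    (a : ℝ) (ha : 0 < a)
    (k : ℕ → ℕ) (hk : ∀ n, 1 ≤ n → 1 ≤ k n ∧ k n ≤ n)
    (hk1 : Tendsto (fun n => (k n : ℝ) / n) atTop (𝓝 1)) :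
    ∀ᵐ ω ∂μ, Tendsto (fun n =>
      nearSum (k n) n a (path X ω) / (n * ordStat (k n) n (path X ω))) atTop (𝓝 0) :=
  stmt13_general μ X hX herg hsup a k hk hk1
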